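/- arXiv:2005.08297 — 3 statements merged into one kernel-verified Lean document; each statement's English description precedes it below -/
import Mathlib

section
/- Let 0 < α < 1 and λ > 0. Then for every s > 0 the derivative of s ↦ E_{α,1}(−λ s^α) is nonpositive, i.e. −λ s^{α−1} E_{α,α}(−λ s^α) ≤ 0; equivalently, E_{α,α}(−z) ≥ 0 for every z ≥ 0. -/
open Finset Filter Topology

namespace MLAux

/-- rising factorial basis `φ i u = u (u+1) ⋯ (u+i-1)` -/
noncomputable def phi (i : ℕ) (u : ℝ) : ℝ := ∏ t ∈ Finset.range i, (u + t)

/-- coefficients of `∏_{j=0}^n (α u + j)` in the rising factorial basis -/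
noncomputable def mlCoef (α : ℝ) : ℕ → ℕ → ℝ
  | 0, i => if i = 1 then α else 0
  | n+1, i => (if i = 0 then 0 else α * mlCoef α n (i-1))
      + (((n:ℝ)+1) - α * i) * mlCoef α n i

lemma mlCoef_eq_zero (α : ℝ) : ∀ n i, n + 2 ≤ i → mlCoef α n i = 0 := by
  intro n
  induction n with
  | zero => intro i hi; simp only [mlCoef]; rw [if_neg]; omega
  | succ n ih =>
    intro i hi
    have h1 : mlCoef α n (i-1) = 0 := ih _ (by omega)
    have h2 : mlCoef α n i = 0 := ih _ (by omega)
    simp [mlCoef, h1, h2]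

lemma mlCoef_nonneg {α : ℝ} (hα : 0 ≤ α) (hα1 : α ≤ 1) :
    ∀ n i, 0 ≤ mlCoef α n i := by
  intro n
  induction n with
  | zero => intro i; simp only [mlCoef]; split <;> simp [hα]
  | succ n ih =>
    intro i
    have hci := ih i
    have hci' := ih (i-1)
    have h2 : 0 ≤ (((n:ℝ)+1) - α * i) * mlCoef α n i := by
      rcases le_or_gt i (n+1) with h | h
      · apply mul_nonneg _ hci
        have h3 : α * i ≤ 1 * i := mul_le_mul_of_nonneg_right hα1 (by positivity)
        have hi : (i:ℝ) ≤ (n:ℝ)+1 := by exact_mod_cast h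
        nlinarith
      · rw [mlCoef_eq_zero α n i (by omega), mul_zero]
    simp only [mlCoef]
    split
    · simpa using h2
    · exact add_nonneg (mul_nonneg hα hci') h2

lemma phi_succ (i : ℕ) (u : ℝ) : phi (i+1) u = phi i u * (u + i) := by
  simp [phi, Finset.prod_range_succ]

lemma mul_phi (i : ℕ) (u : ℝ) : u * phi i u = phi (i+1) u - i * phi i u := by
  rw [phi_succ]; ring

/-- the basis expansion identity -/
lemma prod_eq_sum_mlCoef {α : ℝ} : ∀ (n : ℕ) (u : ℝ),
    ∏ j ∈ Finset.range (n+1), (α * u + j) =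
      ∑ i ∈ Finset.range (n+2), mlCoef α n i * phi i u := by
  intro n
  induction n with
  | zero =>
    intro u
    simp [mlCoef, phi, Finset.sum_range_succ]
  | succ n ih =>
    intro u
    rw [Finset.prod_range_succ, ih u, Finset.sum_mul]
    have key : ∀ i : ℕ, (mlCoef α n i * phi i u) * (α * u + ((n:ℝ)+1)) =
        (α * mlCoef α n i) * phi (i+1) u
          + ((((n:ℝ)+1) - α * i) * mlCoef α n i) * phi i u := by
      intro i
      linear_combination (α * mlCoef α n i) * mul_phi i u
    have hcast : ((n+1 : ℕ) : ℝ) = (n:ℝ)+1 := by push_cast; ring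
    calc ∑ i ∈ Finset.range (n+2), mlCoef α n i * phi i u * (α * u + ((n+1:ℕ):ℝ))
        = (∑ i ∈ Finset.range (n+2), (α * mlCoef α n i) * phi (i+1) u)
            + ∑ i ∈ Finset.range (n+2), ((((n:ℝ)+1) - α * i) * mlCoef α n i) * phi i u := by
          rw [← Finset.sum_add_distrib]
          apply Finset.sum_congr rfl; intro i _
          rw [hcast, key i]
      _ = ∑ i ∈ Finset.range (n+3), mlCoef α (n+1) i * phi i u := by
          rw [Finset.sum_range_succ' (fun i => mlCoef α (n+1) i * phi i u) (n+2)]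
          have hg0 : mlCoef α (n+1) 0 * phi 0 u = (((n:ℝ)+1)) * mlCoef α n 0 := by
            simp [mlCoef, phi]
          have hgs : ∀ i : ℕ, mlCoef α (n+1) (i+1) * phi (i+1) u =
              (α * mlCoef α n i) * phi (i+1) u
                + ((((n:ℝ)+1) - α * (i+1)) * mlCoef α n (i+1)) * phi (i+1) u := by
            intro i
            simp only [mlCoef, if_neg (Nat.succ_ne_zero i), Nat.add_sub_cancel]
            push_cast
            ring
          rw [hg0, Finset.sum_congr rfl (fun i _ => hgs i), Finset.sum_add_distrib]
          -- now: S1 + S2 = S1 + T + g0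
          have hS2 : ∑ i ∈ Finset.range (n+2), ((((n:ℝ)+1) - α * i) * mlCoef α n i) * phi i u
              = (∑ i ∈ Finset.range (n+2), ((((n:ℝ)+1) - α * (i+1)) * mlCoef α n (i+1)) * phi (i+1) u)
                + (((n:ℝ)+1)) * mlCoef α n 0 := by
            rw [Finset.sum_range_succ' (fun i => ((((n:ℝ)+1) - α * i) * mlCoef α n i) * phi i u) (n+1)]
            rw [Finset.sum_range_succ
              (fun i => ((((n:ℝ)+1) - α * (i+1)) * mlCoef α n (i+1)) * phi (i+1) u) (n+1)]
            rw [mlCoef_eq_zero α n (n+1+1) (by omega)]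
            simp [phi]
          rw [hS2]
          ring
  

lemma phi_nat (i m : ℕ) : phi i ((m:ℝ)+1) = ((m+i).choose i : ℝ) * (i.factorial : ℝ) := by
  induction i with
  | zero => simp [phi]
  | succ i ih =>
    rw [phi_succ, ih]
    have h : ((m+(i+1)).choose (i+1) : ℝ) * ((i+1).factorial : ℝ) =
        ((m+i).choose i : ℝ) * (i.factorial : ℝ) * ((m:ℝ)+1+i) := by
      have e1 : (m+i).choose i * i.factorial * m.factorial = (m+i).factorial := by
        have := Nat.choose_mul_factorial_mul_factorial (Nat.le_add_left i m)
        simpa [Nat.add_sub_cancel] using this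
      have e2 : (m+(i+1)).choose (i+1) * (i+1).factorial * m.factorial = (m+(i+1)).factorial := by
        have := Nat.choose_mul_factorial_mul_factorial (Nat.le_add_left (i+1) m)
        simpa [Nat.add_sub_cancel] using this
      have e3 : (m+(i+1)).factorial = (m+i).factorial * (m+i+1) := by
        have : m+(i+1) = (m+i)+1 := by omega
        rw [this, Nat.factorial_succ]; ring
      have hm : (0:ℝ) < (m.factorial : ℝ) := by exact_mod_cast Nat.factorial_pos m
      have e1' : ((m+i).choose i : ℝ) * (i.factorial : ℝ) * (m.factorial : ℝ)
          = ((m+i).factorial : ℝ) := by exact_mod_cast congrArg (Nat.cast : ℕ → ℝ) e1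
      have e2' : ((m+(i+1)).choose (i+1) : ℝ) * ((i+1).factorial : ℝ) * (m.factorial : ℝ)
          = ((m+(i+1)).factorial : ℝ) := by exact_mod_cast congrArg (Nat.cast : ℕ → ℝ) e2
      have e3' : ((m+(i+1)).factorial : ℝ) = ((m+i).factorial : ℝ) * ((m:ℝ)+i+1) := by
        exact_mod_cast congrArg (Nat.cast : ℕ → ℝ) e3
      have h4 := e2'.trans e3'
      rw [← e1'] at h4
      have hm' : (m.factorial : ℝ) ≠ 0 := ne_of_gt hm
      have goal' : (((m+(i+1)).choose (i+1) : ℝ) * ((i+1).factorial : ℝ)) * (m.factorial:ℝ) =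
          (((m+i).choose i : ℝ) * (i.factorial : ℝ) * ((m:ℝ)+1+i)) * (m.factorial:ℝ) := by
        rw [h4]; ring
      exact mul_right_cancel₀ hm' goal'
    rw [h]

lemma hasSum_phi (i : ℕ) {x : ℝ} (hx : |x| < 1) :
    HasSum (fun m : ℕ => phi i ((m:ℝ)+1) * x^m) ((i.factorial : ℝ) / (1-x)^(i+1)) := by
  have h := hasSum_choose_mul_geometric_of_norm_lt_one (𝕜 := ℝ) i (by simpa using hx)
  have h2 := h.mul_left (i.factorial : ℝ)
  have : (i.factorial : ℝ) * (1 / (1-x)^(i+1)) = (i.factorial : ℝ) / (1-x)^(i+1) := by ring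
  rw [this] at h2
  apply HasSum.congr_fun h2
  intro m
  rw [phi_nat]
  ring

lemma prod_shift_pos {s : ℝ} (hs : 0 < s) (n : ℕ) :
    0 < ∏ j ∈ Finset.range (n+1), (s + (j:ℝ)) :=
  Finset.prod_pos fun j _ => by positivity

lemma gammaSeq_pos {s : ℝ} (hs : 0 < s) {n : ℕ} (hn : 1 ≤ n) :
    0 < Real.GammaSeq s n := by
  rw [Real.GammaSeq]
  have h1 : (0:ℝ) < (n:ℝ) ^ s := Real.rpow_pos_of_pos (by exact_mod_cast hn) s
  have h2 : (0:ℝ) < (n.factorial : ℝ) := by exact_mod_cast n.factorial_pos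
  exact div_pos (mul_pos h1 h2) (prod_shift_pos hs n)

lemma gammaSeq_mono {s : ℝ} (hs : 1 ≤ s) {n : ℕ} (hn : 1 ≤ n) :
    Real.GammaSeq s n ≤ Real.GammaSeq s (n+1) := by
  have hs0 : (0:ℝ) < s := lt_of_lt_of_le one_pos hs
  have hn0 : (0:ℝ) < (n:ℝ) := by exact_mod_cast hn
  have hP := prod_shift_pos hs0 n
  have hP' := prod_shift_pos hs0 (n+1)
  rw [Real.GammaSeq, Real.GammaSeq, div_le_div_iff₀ hP hP']
  have hprod : ∏ j ∈ Finset.range (n+2), (s + (j:ℝ))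
      = (∏ j ∈ Finset.range (n+1), (s + (j:ℝ))) * (s + ((n:ℝ)+1)) := by
    rw [Finset.prod_range_succ]; push_cast; ring
  rw [hprod]
  have hfact : ((n+1).factorial : ℝ) = ((n:ℝ)+1) * (n.factorial : ℝ) := by
    rw [Nat.factorial_succ]; push_cast; ring
  have key : (n:ℝ)^s * (s + ((n:ℝ)+1)) ≤ ((n:ℝ)+1)^s * ((n:ℝ)+1) := by
    have hb : 1 + s * (1/(n:ℝ)) ≤ (1 + 1/(n:ℝ)) ^ s := by
      apply one_add_mul_self_le_rpow_one_add _ hs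
      have : (0:ℝ) ≤ 1/(n:ℝ) := by positivity
      linarith
    have he : ((n:ℝ)+1)^s = (n:ℝ)^s * (1 + 1/(n:ℝ))^s := by
      rw [← Real.mul_rpow (le_of_lt hn0) (by positivity)]
      congr 1
      field_simp
    rw [he]
    have h1 : (n:ℝ)^s * ((1 + s * (1/(n:ℝ))) * ((n:ℝ)+1)) ≤
        (n:ℝ)^s * ((1 + 1/(n:ℝ))^s * ((n:ℝ)+1)) := by
      apply mul_le_mul_of_nonneg_left _ (le_of_lt (Real.rpow_pos_of_pos hn0 s))
      apply mul_le_mul_of_nonneg_right hb (by positivity)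
    calc (n:ℝ)^s * (s + ((n:ℝ)+1)) ≤ (n:ℝ)^s * ((1 + s * (1/(n:ℝ))) * ((n:ℝ)+1)) := by
          apply mul_le_mul_of_nonneg_left _ (le_of_lt (Real.rpow_pos_of_pos hn0 s))
          have hinv : (1/(n:ℝ))*(n:ℝ) = 1 := by field_simp
          have hsn : 0 ≤ s * (1/(n:ℝ)) := by positivity
          nlinarith [hinv, hsn]
      _ ≤ (n:ℝ)^s * ((1 + 1/(n:ℝ))^s * ((n:ℝ)+1)) := h1
      _ = ((n:ℝ)^s * (1 + 1/(n:ℝ))^s) * ((n:ℝ)+1) := by ring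
    
  calc (n:ℝ)^s * (n.factorial:ℝ) * ((∏ j ∈ Finset.range (n+1), (s + (j:ℝ))) * (s + ((n:ℝ)+1)))
      = ((n:ℝ)^s * (s + ((n:ℝ)+1))) * (n.factorial:ℝ) * ∏ j ∈ Finset.range (n+1), (s + (j:ℝ)) := by
        ring
    _ ≤ (((n:ℝ)+1)^s * ((n:ℝ)+1)) * (n.factorial:ℝ) * ∏ j ∈ Finset.range (n+1), (s + (j:ℝ)) := by
        apply mul_le_mul_of_nonneg_right _ (le_of_lt hP)
        apply mul_le_mul_of_nonneg_right key (by positivity)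
    _ = ((n:ℝ)+1)^s * ((n+1).factorial:ℝ) * ∏ j ∈ Finset.range (n+1), (s + (j:ℝ)) := by
        rw [hfact]; ring
    _ = (((n:ℕ)+1:ℕ):ℝ)^s * ((n+1).factorial:ℝ) * ∏ j ∈ Finset.range (n+1), (s + (j:ℝ)) := by
        push_cast; ring

lemma gammaSeq_mono' {s : ℝ} (hs : 1 ≤ s) {N n : ℕ} (hN : 1 ≤ N) (h : N ≤ n) :
    Real.GammaSeq s N ≤ Real.GammaSeq s n := by
  induction n with
  | zero => omega
  | succ n ih =>
    rcases Nat.lt_or_ge N (n+1) with h' | h'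
    · exact le_trans (ih (by omega)) (gammaSeq_mono hs (by omega))
    · have : N = n+1 := by omega
      rw [this]

lemma gammaSeq_le_Gamma {s : ℝ} (hs : 1 ≤ s) {N : ℕ} (hN : 1 ≤ N) :
    Real.GammaSeq s N ≤ Real.Gamma s := by
  apply ge_of_tendsto (Real.GammaSeq_tendsto_Gamma s)
  filter_upwards [eventually_ge_atTop N] with n hn
  exact gammaSeq_mono' hs hN hn

lemma factCast_eq_prod (n : ℕ) : (n.factorial : ℝ) = ∏ j ∈ Finset.range n, ((j:ℝ)+1) := by
  induction n with
  | zero => simp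
  | succ k ih => rw [Finset.prod_range_succ, ← ih, Nat.factorial_succ]; push_cast; ring

lemma one_div_gammaSeq_le {s : ℝ} (hs : 0 < s) {n : ℕ} (hn : 1 ≤ n) :
    1 / Real.GammaSeq s n ≤ s * Real.exp s := by
  have hn0 : (0:ℝ) < (n:ℝ) := by exact_mod_cast hn
  have h1 : (0:ℝ) < (n:ℝ) ^ s := Real.rpow_pos_of_pos hn0 s
  have h2 : (0:ℝ) < (n.factorial : ℝ) := by exact_mod_cast n.factorial_pos
  rw [Real.GammaSeq, one_div_div]
  have hprod : ∏ j ∈ Finset.range (n+1), (s + (j:ℝ))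
      = s * ∏ j ∈ Finset.range n, (s + ((j:ℝ)+1)) := by
    rw [Finset.prod_range_succ' (fun j => (s + (j:ℝ))) n]
    push_cast; ring
  have hfactprod : (n.factorial : ℝ) = ∏ j ∈ Finset.range n, ((j:ℝ)+1) := factCast_eq_prod n
  have hterm : ∀ j ∈ Finset.range n, s + ((j:ℝ)+1) ≤ (((j:ℝ)+1) * Real.exp (s/((j:ℝ)+1))) := by
    intro j _
    have hj : (0:ℝ) < (j:ℝ)+1 := by positivity
    have := Real.add_one_le_exp (s/((j:ℝ)+1))
    calc s + ((j:ℝ)+1) = ((j:ℝ)+1) * (s/((j:ℝ)+1) + 1) := by field_simp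
      _ ≤ ((j:ℝ)+1) * Real.exp (s/((j:ℝ)+1)) := by
          apply mul_le_mul_of_nonneg_left this (le_of_lt hj)
  have hprodle : ∏ j ∈ Finset.range n, (s + ((j:ℝ)+1))
      ≤ ∏ j ∈ Finset.range n, (((j:ℝ)+1) * Real.exp (s/((j:ℝ)+1))) := by
    apply Finset.prod_le_prod (fun j _ => by positivity) hterm
  have hexp : ∏ j ∈ Finset.range n, (((j:ℝ)+1) * Real.exp (s/((j:ℝ)+1)))
      = (n.factorial : ℝ) * Real.exp (∑ j ∈ Finset.range n, s/((j:ℝ)+1)) := by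
    rw [Finset.prod_mul_distrib, ← Real.exp_sum, hfactprod]
  have hsum : ∑ j ∈ Finset.range n, s/((j:ℝ)+1) = s * ∑ j ∈ Finset.range n, 1/((j:ℝ)+1) := by
    rw [Finset.mul_sum]; apply Finset.sum_congr rfl; intro j _; ring
  have hharm : ∑ j ∈ Finset.range n, 1/((j:ℝ)+1) ≤ 1 + Real.log n := by
    have := harmonic_le_one_add_log n
    have hh : ((harmonic n : ℚ) : ℝ) = ∑ j ∈ Finset.range n, 1/((j:ℝ)+1) := by
      rw [harmonic]; push_cast; apply Finset.sum_congr rfl; intro j _; rw [one_div]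
    rw [hh] at this
    linarith
  have hexple : Real.exp (∑ j ∈ Finset.range n, s/((j:ℝ)+1)) ≤ Real.exp s * (n:ℝ)^s := by
    rw [hsum]
    have h3 : s * ∑ j ∈ Finset.range n, 1/((j:ℝ)+1) ≤ s * (1 + Real.log n) :=
      mul_le_mul_of_nonneg_left hharm (le_of_lt hs)
    calc Real.exp (s * ∑ j ∈ Finset.range n, 1/((j:ℝ)+1)) ≤ Real.exp (s * (1 + Real.log n)) :=
          Real.exp_le_exp.mpr h3
      _ = Real.exp s * (n:ℝ)^s := by
          rw [Real.rpow_def_of_pos hn0]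
          rw [← Real.exp_add]
          congr 1
          ring
  rw [div_le_iff₀ (mul_pos h1 h2), hprod]
  calc s * ∏ j ∈ Finset.range n, (s + ((j:ℝ)+1))
      ≤ s * ((n.factorial : ℝ) * Real.exp (∑ j ∈ Finset.range n, s/((j:ℝ)+1))) := by
        apply mul_le_mul_of_nonneg_left _ (le_of_lt hs)
        rw [← hexp]; exact hprodle
    _ ≤ s * ((n.factorial : ℝ) * (Real.exp s * (n:ℝ)^s)) := by
        apply mul_le_mul_of_nonneg_left _ (le_of_lt hs)
        apply mul_le_mul_of_nonneg_left hexple (le_of_lt h2)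
    _ = s * Real.exp s * ((n:ℝ)^s * (n.factorial:ℝ)) := by ring


-- new material

lemma summable_prodPoly {α : ℝ} (n : ℕ) {x : ℝ} (hx : |x| < 1) :
    Summable (fun m : ℕ => (∏ j ∈ Finset.range (n+1), (α * ((m:ℝ)+1) + j)) * x^m) := by
  have he : (fun m : ℕ => (∏ j ∈ Finset.range (n+1), (α * ((m:ℝ)+1) + j)) * x^m)
      = fun m : ℕ => ∑ i ∈ Finset.range (n+2), mlCoef α n i * (phi i ((m:ℝ)+1) * x^m) := by
    funext m
    rw [prod_eq_sum_mlCoef n ((m:ℝ)+1), Finset.sum_mul]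
    apply Finset.sum_congr rfl; intro i _; ring
  rw [he]
  apply summable_sum
  intro i _
  exact ((hasSum_phi i hx).summable).mul_left _

lemma tsum_prodPoly_nonneg {α : ℝ} (hα : 0 ≤ α) (hα1 : α ≤ 1) (n : ℕ) {w : ℝ}
    (hw : 0 ≤ w) (hw1 : w < 1) :
    0 ≤ ∑' m : ℕ, (∏ j ∈ Finset.range (n+1), (α * ((m:ℝ)+1) + j)) * (-w)^m := by
  have hx : |(-w)| < 1 := by rw [abs_neg, abs_of_nonneg hw]; exact hw1
  have he : (fun m : ℕ => (∏ j ∈ Finset.range (n+1), (α * ((m:ℝ)+1) + j)) * (-w)^m)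
      = fun m : ℕ => ∑ i ∈ Finset.range (n+2), mlCoef α n i * (phi i ((m:ℝ)+1) * (-w)^m) := by
    funext m
    rw [prod_eq_sum_mlCoef n ((m:ℝ)+1), Finset.sum_mul]
    apply Finset.sum_congr rfl; intro i _; ring
  rw [he, Summable.tsum_finsetSum (fun i _ => ((hasSum_phi i hx).summable).mul_left _)]
  apply Finset.sum_nonneg
  intro i _
  rw [((hasSum_phi i hx).mul_left _).tsum_eq]
  have h1 : (0:ℝ) < 1 - (-w) := by linarith
  have : 0 ≤ (i.factorial : ℝ) / (1-(-w))^(i+1) := by positivity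
  exact mul_nonneg (mlCoef_nonneg hα hα1 n i) this

lemma term_eq {α z : ℝ} (hα : 0 < α) {n : ℕ} (hn : 1 ≤ n) (m : ℕ) :
    (-z)^m / Real.GammaSeq (α * ((m:ℝ)+1)) n
      = (1/(((n:ℝ)^α) * (n.factorial:ℝ)))
        * ((∏ j ∈ Finset.range (n+1), (α * ((m:ℝ)+1) + j)) * (-(z/(n:ℝ)^α))^m) := by
  have hn0 : (0:ℝ) < (n:ℝ) := by exact_mod_cast hn
  have hna : (0:ℝ) < (n:ℝ)^α := Real.rpow_pos_of_pos hn0 α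
  have hfac : (0:ℝ) < (n.factorial : ℝ) := by exact_mod_cast n.factorial_pos
  have hP : (0:ℝ) < ∏ j ∈ Finset.range (n+1), (α * ((m:ℝ)+1) + j) := by
    apply Finset.prod_pos; intro j _
    have : (0:ℝ) < α * ((m:ℝ)+1) := by positivity
    positivity
  have hrw : (n:ℝ) ^ (α * ((m:ℝ)+1)) = ((n:ℝ)^α)^(m+1) := by
    rw [Real.rpow_mul (le_of_lt hn0)]
    rw [show ((m:ℝ)+1) = ((m+1 : ℕ):ℝ) by push_cast; ring]
    rw [Real.rpow_natCast]
  rw [Real.GammaSeq, hrw]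
  rw [div_div_eq_mul_div, pow_succ]
  have hxm : (-(z/(n:ℝ)^α))^m = (-z)^m / ((n:ℝ)^α)^m := by
    rw [← neg_div, div_pow]
  rw [hxm]
  field_simp

theorem tsum_ml_nonneg {α : ℝ} (hα : 0 < α) (hα1 : α ≤ 1) {z : ℝ} (hz : 0 ≤ z) :
    0 ≤ ∑' m : ℕ, (-z)^m / Real.Gamma (α * ((m:ℝ)+1)) := by
  -- choose N
  obtain ⟨N, hN1, hNz⟩ : ∃ N : ℕ, 1 ≤ N ∧ z < (N:ℝ)^α := by
    refine ⟨max 1 ⌈(z+1)^(1/α)⌉₊, le_max_left _ _, ?_⟩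
    have h1 : ((z+1):ℝ)^(1/α) ≤ ((max 1 ⌈(z+1)^(1/α)⌉₊ : ℕ):ℝ) := by
      calc ((z+1):ℝ)^(1/α) ≤ ((⌈(z+1)^(1/α)⌉₊ : ℕ):ℝ) := Nat.le_ceil _
        _ ≤ _ := by exact_mod_cast Nat.le_max_right 1 _
    have h2 : ((z+1):ℝ)^((1/α)*α) ≤ ((max 1 ⌈(z+1)^(1/α)⌉₊ : ℕ):ℝ)^α := by
      rw [Real.rpow_mul (by linarith : (0:ℝ) ≤ z+1)]
      apply Real.rpow_le_rpow (Real.rpow_nonneg (by linarith) _) h1 (le_of_lt hα)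
    rw [one_div_mul_cancel (ne_of_gt hα), Real.rpow_one] at h2
    linarith
  have hNa : (0:ℝ) < (N:ℝ)^α := Real.rpow_pos_of_pos (by exact_mod_cast hN1) α
  -- the approximants
  set f : ℕ → ℕ → ℝ := fun n m => (-z)^m / Real.GammaSeq (α * ((m:ℝ)+1)) n with hf
  -- bound
  set b : ℕ → ℝ := fun m => if α * ((m:ℝ)+1) < 1 then z^m * Real.exp 1
      else z^m * (1 / Real.GammaSeq (α * ((m:ℝ)+1)) N) with hb
  have hwN : 0 ≤ z/(N:ℝ)^α := by positivity
  have hwN1 : z/(N:ℝ)^α < 1 := (div_lt_one hNa).mpr hNz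
  have hxN : |z/(N:ℝ)^α| < 1 := by rw [abs_of_nonneg hwN]; exact hwN1
  -- summability of bound
  have hgsum : Summable (fun m : ℕ => z^m * (1 / Real.GammaSeq (α * ((m:ℝ)+1)) N)) := by
    have he : (fun m : ℕ => z^m * (1 / Real.GammaSeq (α * ((m:ℝ)+1)) N))
        = fun m : ℕ => (1/(((N:ℝ)^α) * (N.factorial:ℝ)))
          * ((∏ j ∈ Finset.range (N+1), (α * ((m:ℝ)+1) + j)) * (z/(N:ℝ)^α)^m) := by
      funext m
      have := term_eq (z := -z) hα hN1 m
      simp only [neg_div, neg_neg] at this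
      rw [show z^m * (1 / Real.GammaSeq (α * ((m:ℝ)+1)) N)
          = z^m / Real.GammaSeq (α * ((m:ℝ)+1)) N by ring, this]
    rw [he]
    exact (summable_prodPoly N hxN).mul_left _
  have hbsum : Summable b := by
    set M := ⌈1/α⌉₊ + 1 with hM
    apply (summable_nat_add_iff M).mp
    have he : (fun m : ℕ => b (m + M))
        = fun m : ℕ => z^(m+M) * (1 / Real.GammaSeq (α * (((m+M : ℕ):ℝ)+1)) N) := by
      funext m
      rw [hb]
      simp only []
      rw [if_neg]
      push_cast
      intro hcon
      have h1a : (1/α) ≤ (⌈1/α⌉₊ : ℝ) := Nat.le_ceil _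
      have hm0 : (0:ℝ) ≤ (m:ℝ) := Nat.cast_nonneg m
      have hMle : (1/α) ≤ ((m:ℝ) + ((⌈1/α⌉₊:ℝ) + 1) + 1) := by linarith
      have h2 : α * (1/α) ≤ α * ((m:ℝ) + ((⌈1/α⌉₊:ℝ) + 1) + 1) :=
        mul_le_mul_of_nonneg_left hMle (le_of_lt hα)
      rw [mul_one_div, div_self (ne_of_gt hα)] at h2
      rw [hM] at hcon; push_cast at hcon
      linarith
    rw [he]
    exact ((summable_nat_add_iff M).mpr hgsum).congr (fun m => rfl)
  -- pointwise limits
  have hlim : ∀ m : ℕ, Tendsto (fun n => f n m) atTop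
      (𝓝 ((-z)^m / Real.Gamma (α * ((m:ℝ)+1)))) := by
    intro m
    have hs : (0:ℝ) < α * ((m:ℝ)+1) := by positivity
    exact tendsto_const_nhds.div (Real.GammaSeq_tendsto_Gamma _)
      (ne_of_gt (Real.Gamma_pos_of_pos hs))
  -- bound eventually
  have hbound : ∀ᶠ n in atTop, ∀ m : ℕ, ‖f n m‖ ≤ b m := by
    filter_upwards [eventually_ge_atTop N] with n hn
    intro m
    have hn1 : 1 ≤ n := le_trans hN1 hn
    have hs : (0:ℝ) < α * ((m:ℝ)+1) := by positivity
    have hGpos := gammaSeq_pos hs hn1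
    have habs : ‖f n m‖ = z^m / Real.GammaSeq (α * ((m:ℝ)+1)) n := by
      rw [hf]
      simp only []
      rw [Real.norm_eq_abs, abs_div, abs_of_pos hGpos, abs_pow, abs_neg, abs_of_nonneg hz]
    rw [habs, hb]
    simp only []
    split
    · rename_i hlt
      have h1 := one_div_gammaSeq_le hs hn1
      have h2 : α * ((m:ℝ)+1) * Real.exp (α * ((m:ℝ)+1)) ≤ 1 * Real.exp 1 := by
        apply mul_le_mul (le_of_lt hlt) (Real.exp_le_exp.mpr (le_of_lt hlt))
          (le_of_lt (Real.exp_pos _)) zero_le_one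
      rw [div_eq_mul_one_div]
      apply mul_le_mul_of_nonneg_left _ (pow_nonneg hz m)
      calc 1 / Real.GammaSeq (α * ((m:ℝ)+1)) n
          ≤ α * ((m:ℝ)+1) * Real.exp (α * ((m:ℝ)+1)) := h1
        _ ≤ Real.exp 1 := by linarith
    · rename_i hge
      push_neg at hge
      rw [div_eq_mul_one_div]
      apply mul_le_mul_of_nonneg_left _ (pow_nonneg hz m)
      apply one_div_le_one_div_of_le (gammaSeq_pos hs hN1)
      exact gammaSeq_mono' hge hN1 hn
  -- limit statement
  have hT := tendsto_tsum_of_dominated_convergence hbsum hlim hbound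
  -- nonnegativity of approximants
  apply ge_of_tendsto hT
  filter_upwards [eventually_ge_atTop N] with n hn
  have hn1 : 1 ≤ n := le_trans hN1 hn
  have hn0 : (0:ℝ) < (n:ℝ) := by exact_mod_cast hn1
  have hna : (0:ℝ) < (n:ℝ)^α := Real.rpow_pos_of_pos hn0 α
  have hzn : z < (n:ℝ)^α := by
    calc z < (N:ℝ)^α := hNz
      _ ≤ (n:ℝ)^α := by
        apply Real.rpow_le_rpow (Nat.cast_nonneg N) (by exact_mod_cast hn) (le_of_lt hα)
  have hw : 0 ≤ z/(n:ℝ)^α := by positivity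
  have hw1 : z/(n:ℝ)^α < 1 := (div_lt_one hna).mpr hzn
  have he : (fun m : ℕ => f n m)
      = fun m : ℕ => (1/(((n:ℝ)^α) * (n.factorial:ℝ)))
        * ((∏ j ∈ Finset.range (n+1), (α * ((m:ℝ)+1) + j)) * (-(z/(n:ℝ)^α))^m) := by
    funext m
    exact term_eq hα hn1 m
  calc (0:ℝ) ≤ (1/(((n:ℝ)^α) * (n.factorial:ℝ)))
        * ∑' m : ℕ, ((∏ j ∈ Finset.range (n+1), (α * ((m:ℝ)+1) + j)) * (-(z/(n:ℝ)^α))^m) := by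
        apply mul_nonneg (by positivity)
        exact tsum_prodPoly_nonneg (le_of_lt hα) hα1 n hw hw1
    _ = ∑' m : ℕ, f n m := by
        rw [← tsum_mul_left]
        rw [he]


end MLAux

/-- The Mittag-Leffler function `E_{α,β}(z) = ∑_{m=0}^∞ z^m / Γ(α m + β)`. -/
noncomputable def mittagLeffler (α β z : ℝ) : ℝ :=
  ∑' m : ℕ, z ^ m / Real.Gamma (α * m + β)

/-- For `0 < α < 1` and `λ > 0`: for every `s > 0` the derivative
`−λ s^{α−1} E_{α,α}(−λ s^α)` of `s ↦ E_{α,1}(−λ s^α)` is nonpositive;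
equivalently, `E_{α,α}(−z) ≥ 0` for every `z ≥ 0`. -/
theorem mittagLeffler_deriv_nonpos (α lam : ℝ) (hα : 0 < α) (hα1 : α < 1)
    (hlam : 0 < lam) :
    (∀ s : ℝ, 0 < s →
        -lam * s ^ (α - 1) * mittagLeffler α α (-lam * s ^ α) ≤ 0) ∧
      (∀ z : ℝ, 0 ≤ z → 0 ≤ mittagLeffler α α (-z)) := by
  have key : ∀ z : ℝ, 0 ≤ z → 0 ≤ mittagLeffler α α (-z) := by
    intro z hz
    have h1 : mittagLeffler α α (-z) = ∑' m : ℕ, (-z)^m / Real.Gamma (α * ((m:ℝ)+1)) := by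
      rw [mittagLeffler]
      apply tsum_congr
      intro m
      rw [show α * (m:ℝ) + α = α * ((m:ℝ)+1) by ring]
    rw [h1]
    exact MLAux.tsum_ml_nonneg hα (le_of_lt hα1) hz
  constructor
  · intro s hs
    have hML : 0 ≤ mittagLeffler α α (-lam * s ^ α) := by
      rw [show -lam * s ^ α = -(lam * s ^ α) by ring]
      apply key
      have : (0:ℝ) < s ^ α := Real.rpow_pos_of_pos hs α
      positivity
    have hpos : (0:ℝ) < s ^ (α - 1) := Real.rpow_pos_of_pos hs (α - 1)
    have h2 : 0 ≤ lam * s ^ (α - 1) * mittagLeffler α α (-lam * s ^ α) := by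
      apply mul_nonneg (by positivity) hML
    calc -lam * s ^ (α - 1) * mittagLeffler α α (-lam * s ^ α)
        = -(lam * s ^ (α - 1) * mittagLeffler α α (-lam * s ^ α)) := by ring
      _ ≤ 0 := neg_nonpos.mpr h2
  · exact key
end

section
/- Let 0 < α < 1, λ > 0, μ > 0, T > 0, and set ν = μ/(1+λ). Let f : [0, T] → ℝ be continuously differentiable. Then for every t ∈ (0, T], (1/(1+λ)) ∫_0^t s^{α−1} E_{α,α}(−ν s^α) f(t−s) ds = f(t)/μ − (f(0)/μ) E_{α,1}(−ν t^α) − (1/μ) ∫_0^t E_{α,1}(−ν s^α) f'(t−s) ds. -/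
set_option maxHeartbeats 1000000

open MeasureTheory Set
open scoped Nat


lemma gamma_ge_exp_neg_one {x : ℝ} (hx : 1 ≤ x) : Real.exp (-1) ≤ Real.Gamma x := by
  have hx0 : (0:ℝ) < x := by linarith
  rw [Real.Gamma_eq_integral hx0]
  have hint : IntegrableOn (fun t : ℝ => Real.exp (-t) * t ^ (x - 1)) (Ioi 0) :=
    Real.GammaIntegral_convergent hx0
  have hint1 : IntegrableOn (fun t : ℝ => Real.exp (-t) * t ^ (x - 1)) (Ioi 1) :=
    hint.mono_set (Ioi_subset_Ioi (by norm_num))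
  have h1 : Real.exp (-1) = ∫ t in Ioi (1:ℝ), Real.exp (-t) := (integral_exp_neg_Ioi 1).symm
  rw [h1]
  have step1 : (∫ t in Ioi (1:ℝ), Real.exp (-t)) ≤
      ∫ t in Ioi (1:ℝ), Real.exp (-t) * t ^ (x - 1) := by
    have hexp : IntegrableOn (fun t : ℝ => Real.exp (-t)) (Ioi 1) := by
      simpa using exp_neg_integrableOn_Ioi (1:ℝ) one_pos
    refine setIntegral_mono_on hexp hint1 measurableSet_Ioi ?_
    intro t ht
    have ht1 : (1:ℝ) ≤ t := le_of_lt ht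
    nth_rewrite 1 [← mul_one (Real.exp (-t))]
    gcongr
    exact Real.one_le_rpow ht1 (by linarith)
  refine step1.trans ?_
  refine setIntegral_mono_set hint ?_ (HasSubset.Subset.eventuallyLE (Ioi_subset_Ioi (by norm_num)))
  filter_upwards [self_mem_ae_restrict measurableSet_Ioi] with t ht
  have : (0:ℝ) < t := ht
  positivity

lemma gamma_ge_factorial {x : ℝ} (hx : 1 ≤ x) (n : ℕ) :
    (n ! : ℝ) / Real.exp 1 ≤ Real.Gamma (x + n) := by
  induction n with
  | zero =>
      simpa [Real.exp_neg] using gamma_ge_exp_neg_one hx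
  | succ n ih =>
      have hxn : x + n ≠ 0 := by positivity
      have h1 : Real.Gamma (x + (n+1) : ℝ) = (x + n) * Real.Gamma (x + n) := by
        rw [show (x + ((n:ℝ)+1)) = (x + n) + 1 by ring, Real.Gamma_add_one hxn]
      rw [Nat.cast_add, Nat.cast_one, h1]
      have hge : ((n:ℝ) + 1) ≤ x + n := by linarith
      calc ((n+1)! : ℝ) / Real.exp 1 = ((n:ℝ)+1) * ((n ! : ℝ) / Real.exp 1) := by
            push_cast [Nat.factorial_succ]; ring
        _ ≤ (x + n) * Real.Gamma (x + n) := by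
            have h0 : (0:ℝ) ≤ (n ! : ℝ) / Real.exp 1 := by positivity
            exact mul_le_mul hge ih h0 (by linarith)

lemma gamma_floor_ge {y : ℝ} (hy : -1 < y) :
    ((Nat.floor y)! : ℝ) / Real.exp 1 ≤ Real.Gamma (y + 1) := by
  rcases le_or_gt 0 y with h0 | h0
  · have hfl : (Nat.floor y : ℝ) ≤ y := Nat.floor_le h0
    have key := gamma_ge_factorial (x := y - Nat.floor y + 1) (by linarith) (Nat.floor y)
    have : y - (Nat.floor y : ℝ) + 1 + (Nat.floor y : ℝ) = y + 1 := by ring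
    rwa [this] at key
  · have hfl : Nat.floor y = 0 := by
      rcases le_or_gt y 0 with h|h
      · exact Nat.floor_eq_zero.mpr (lt_of_le_of_lt h one_pos)
      · linarith
    rw [hfl]
    have h1 : Real.Gamma (y + 2) = (y+1) * Real.Gamma (y+1) := by
      rw [show (y + 2 : ℝ) = (y+1)+1 by ring, Real.Gamma_add_one (by linarith)]
    have h2 : Real.exp (-1) ≤ Real.Gamma (y + 2) := gamma_ge_exp_neg_one (by linarith)
    have hy1 : 0 < y + 1 := by linarith
    have hy1' : y + 1 ≤ 1 := by linarith
    have hG : 0 < Real.Gamma (y+1) := Real.Gamma_pos_of_pos hy1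
    rw [h1] at h2
    have : Real.exp (-1) ≤ Real.Gamma (y+1) := by nlinarith
    simpa [Real.exp_neg] using this

lemma factorial_ge_pow {K : ℝ} (hK : 0 ≤ K) (n : ℕ) :
    K ^ n / Real.exp K ≤ (n ! : ℝ) := by
  have h1 : K ^ n / (n ! : ℝ) ≤ Real.exp K := by
    calc K ^ n / (n ! : ℝ) ≤ ∑ i ∈ Finset.range (n+1), K ^ i / (i ! : ℝ) := by
          refine Finset.single_le_sum (f := fun i => K ^ i / (i ! : ℝ)) ?_ (by simp)
          intro i _; positivity
      _ ≤ Real.exp K := Real.sum_le_exp_of_nonneg hK _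
  have hfac : (0:ℝ) < (n ! : ℝ) := by positivity
  rw [div_le_iff₀ hfac] at h1
  rw [div_le_iff₀ (Real.exp_pos K), mul_comm]
  exact h1

lemma gamma_ML_lower {α β K : ℝ} (hα : 0 < α) (hβ : 0 < β) (hK : 1 ≤ K) (m : ℕ) :
    K ^ (α * m - 2) / (Real.exp K * Real.exp 1) ≤ Real.Gamma (α * m + β) := by
  have hm0 : (0:ℝ) ≤ α * m := by positivity
  have hy1 : (-1:ℝ) < α * m + β - 1 := by linarith
  have h1 : ((Nat.floor (α * m + β - 1))! : ℝ) / Real.exp 1 ≤ Real.Gamma (α * m + β) := by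
    have := gamma_floor_ge hy1
    rwa [show α * m + β - 1 + 1 = α * m + β by ring] at this
  have h2 : K ^ (Nat.floor (α * m + β - 1)) / Real.exp K
      ≤ ((Nat.floor (α * m + β - 1))! : ℝ) := factorial_ge_pow (by linarith) _
  have h3 : K ^ (α * m - 2) ≤ K ^ (Nat.floor (α * m + β - 1)) := by
    rw [← Real.rpow_natCast K]
    apply Real.rpow_le_rpow_of_exponent_le hK
    have hfl : (α * m + β - 1) - 1 < ((Nat.floor (α * m + β - 1)):ℝ) :=
      Nat.sub_one_lt_floor _
    linarith
  calc K ^ (α * m - 2) / (Real.exp K * Real.exp 1)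
      ≤ (K ^ (Nat.floor (α * m + β - 1)) : ℝ) / (Real.exp K * Real.exp 1) := by
        gcongr
    _ = (K ^ (Nat.floor (α * m + β - 1)) / Real.exp K) / Real.exp 1 := by
        rw [div_div]
    _ ≤ ((Nat.floor (α * m + β - 1))! : ℝ) / Real.exp 1 := by gcongr
    _ ≤ _ := h1

lemma summable_ML {α β C : ℝ} (hα : 0 < α) (hβ : 0 < β) (hC : 0 ≤ C) :
    Summable (fun m : ℕ => ((m:ℝ) + 1) * C ^ m / Real.Gamma (α * m + β)) := by
  set K := max 1 ((4*C+1) ^ (α⁻¹ : ℝ)) with hKdef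
  have hK1 : (1:ℝ) ≤ K := le_max_left _ _
  have hK0 : (0:ℝ) < K := lt_of_lt_of_le one_pos hK1
  have hKα : 4*C+1 ≤ K ^ (α : ℝ) := by
    have h0 : (0:ℝ) ≤ 4*C+1 := by linarith
    have h1 : ((4*C+1) ^ (α⁻¹:ℝ)) ^ (α:ℝ) = 4*C+1 := by
      rw [← Real.rpow_mul h0, inv_mul_cancel₀ hα.ne', Real.rpow_one]
    rw [← h1]
    exact Real.rpow_le_rpow (Real.rpow_nonneg h0 _) (le_max_right _ _) hα.le
  have hKα0 : (0:ℝ) < K ^ (α:ℝ) := Real.rpow_pos_of_pos hK0 _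
  have hbound : ∀ m : ℕ, ((m:ℝ) + 1) * C ^ m / Real.Gamma (α * m + β)
      ≤ (2 * (Real.exp K * Real.exp 1) * K ^ (2:ℝ)) * (1/2 : ℝ) ^ m := by
    intro m
    have hG := gamma_ML_lower (β := β) hα hβ hK1 m
    have hGpos : 0 < Real.Gamma (α * m + β) := Real.Gamma_pos_of_pos (by positivity)
    have hKr : (0:ℝ) < K ^ (α * m - 2) / (Real.exp K * Real.exp 1) := by positivity
    have ha : (0:ℝ) ≤ ((m:ℝ) + 1) * C ^ m := by positivity
    calc ((m:ℝ) + 1) * C ^ m / Real.Gamma (α * m + β)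
        ≤ ((m:ℝ) + 1) * C ^ m / (K ^ (α * m - 2) / (Real.exp K * Real.exp 1)) := by
          exact div_le_div_of_nonneg_left ha hKr hG
      _ = ((m:ℝ) + 1) * C ^ m * (Real.exp K * Real.exp 1) / K ^ (α * m - 2) := by
          rw [div_div_eq_mul_div]
      _ = (Real.exp K * Real.exp 1) * K ^ (2:ℝ) * (((m:ℝ)+1) * (C / K ^ (α:ℝ)) ^ m) := by
          rw [Real.rpow_sub hK0, Real.rpow_mul hK0.le, Real.rpow_natCast]
          rw [div_pow]
          field_simp
      _ ≤ (Real.exp K * Real.exp 1) * K ^ (2:ℝ) * (2 * (2:ℝ) ^ m * (1/4 : ℝ) ^ m) := by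
          have h4 : C / K ^ (α:ℝ) ≤ 1/4 := by
            have ha1 : C / K ^ (α:ℝ) ≤ C / (4*C+1) :=
              div_le_div_of_nonneg_left hC (by linarith) hKα
            have h2 : C / (4*C+1) ≤ 1/4 := by
              rw [div_le_div_iff₀ (by linarith) (by norm_num)]
              linarith
            linarith
          have h5 : ((m:ℝ)+1) ≤ 2 * (2:ℝ) ^ m := by
            have h1 : (m:ℝ) < (2:ℝ) ^ m := by exact_mod_cast Nat.lt_two_pow_self (n := m)
            have h2 : (1:ℝ) ≤ (2:ℝ) ^ m := by exact_mod_cast Nat.one_le_two_pow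
            linarith
          have h6 : ((m:ℝ)+1) * (C / K ^ (α:ℝ)) ^ m ≤ 2 * (2:ℝ) ^ m * (1/4 : ℝ) ^ m := by
            have hp := pow_le_pow_left₀ (div_nonneg hC hKα0.le) h4 m
            exact mul_le_mul h5 hp (pow_nonneg (div_nonneg hC hKα0.le) m) (by positivity)
          exact mul_le_mul_of_nonneg_left h6 (by positivity)
      _ = (2 * (Real.exp K * Real.exp 1) * K ^ (2:ℝ)) * (1/2 : ℝ) ^ m := by
          have key : ((2:ℝ)) ^ m * (1/4 : ℝ) ^ m = (1/2 : ℝ) ^ m := by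
            rw [← mul_pow]; norm_num
          linear_combination (Real.exp K * Real.exp 1 * K ^ (2:ℝ) * 2) * key
    
  refine Summable.of_nonneg_of_le (fun m => ?_) hbound ?_
  · have hGpos : 0 < Real.Gamma (α * m + β) := Real.Gamma_pos_of_pos (by positivity)
    positivity
  · exact (summable_geometric_of_lt_one (by norm_num) (by norm_num)).mul_left _

lemma summable_ML' {α β : ℝ} (hα : 0 < α) (hβ : 0 < β) (z : ℝ) :
    Summable (fun m : ℕ => z ^ m / Real.Gamma (α * m + β)) := by
  refine Summable.of_norm_bounded (summable_ML hα hβ (abs_nonneg z)) (fun m => ?_)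
  have hGpos : 0 < Real.Gamma (α * m + β) := Real.Gamma_pos_of_pos (by positivity)
  rw [Real.norm_eq_abs, abs_div, abs_of_pos hGpos, abs_pow]
  rw [div_le_div_iff₀ hGpos hGpos]
  have h1 : |z| ^ m ≤ ((m:ℝ)+1) * |z| ^ m := by
    nlinarith [pow_nonneg (abs_nonneg z) m, Nat.cast_nonneg (α := ℝ) m]
  nlinarith [hGpos]

lemma ML_abs_le {α β : ℝ} (hα : 0 < α) (hβ : 0 < β) {z R : ℝ} (hz : |z| ≤ R) :
    |mittagLeffler α β z| ≤ mittagLeffler α β R := by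
  unfold mittagLeffler
  have hGpos : ∀ m : ℕ, 0 < Real.Gamma (α * m + β) :=
    fun m => Real.Gamma_pos_of_pos (by positivity)
  have hs1 : Summable (fun m : ℕ => ‖z ^ m / Real.Gamma (α * m + β)‖) :=
    (summable_ML' hα hβ z).abs
  calc |∑' m : ℕ, z ^ m / Real.Gamma (α * m + β)|
      ≤ ∑' m : ℕ, ‖z ^ m / Real.Gamma (α * m + β)‖ := norm_tsum_le_tsum_norm hs1
    _ ≤ ∑' m : ℕ, R ^ m / Real.Gamma (α * m + β) := by
        refine Summable.tsum_le_tsum (fun m => ?_) hs1 (summable_ML' hα hβ R)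
        rw [Real.norm_eq_abs, abs_div, abs_of_pos (hGpos m), abs_pow]
        gcongr

lemma ML_continuous {α β : ℝ} (hα : 0 < α) (hβ : 0 < β) :
    Continuous (mittagLeffler α β) := by
  rw [continuous_iff_continuousAt]
  intro z
  set R := |z| + 1 with hR
  have hR0 : 0 ≤ R := by positivity
  have hcont : ContinuousOn (mittagLeffler α β) (Metric.closedBall 0 R) := by
    have : ContinuousOn (fun x : ℝ => ∑' m : ℕ, x ^ m / Real.Gamma (α * m + β))
        (Metric.closedBall 0 R) := by
      refine continuousOn_tsum (fun m => ((continuous_pow m).div_const _).continuousOn)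
        (summable_ML hα hβ hR0) (fun m x hx => ?_)
      have hGpos : 0 < Real.Gamma (α * m + β) := Real.Gamma_pos_of_pos (by positivity)
      have hxR : |x| ≤ R := by
        simpa [Real.dist_eq] using Metric.mem_closedBall.mp hx
      rw [Real.norm_eq_abs, abs_div, abs_of_pos hGpos, abs_pow]
      rw [div_le_div_iff₀ hGpos hGpos]
      have h1 : |x| ^ m ≤ R ^ m := pow_le_pow_left₀ (abs_nonneg x) hxR m
      have h2 : R ^ m ≤ ((m:ℝ)+1) * R ^ m := by
        nlinarith [pow_nonneg hR0 m, Nat.cast_nonneg (α := ℝ) m]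
      nlinarith [hGpos]
    exact this
  refine hcont.continuousAt (Metric.closedBall_mem_nhds_of_mem ?_)
  simp [Real.dist_eq, hR]

lemma ML_hasDerivAt {α ν : ℝ} (hα : 0 < α) (hν : 0 < ν) {s : ℝ} (hs : 0 < s) :
    HasDerivAt (fun x : ℝ => mittagLeffler α 1 (-ν * x ^ α))
      (-ν * s ^ (α - 1) * mittagLeffler α α (-ν * s ^ α)) s := by
  set A := s / 2 with hA
  set B := max 1 (2 * s) with hB
  have hA0 : 0 < A := by positivity
  have hB1 : (1:ℝ) ≤ B := le_max_left _ _
  have hB0 : 0 < B := lt_of_lt_of_le one_pos hB1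
  have hAB : A < B := by
    have : 2 * s ≤ B := le_max_right _ _
    simp only [hA]; linarith
  have hsmem : s ∈ Set.Ioo A B := by
    constructor
    · simp only [hA]; linarith
    · have : 2 * s ≤ B := le_max_right _ _; linarith
  set g : ℕ → ℝ → ℝ := fun m x => (-ν) ^ m * x ^ (α * m) / Real.Gamma (α * m + 1) with hg_def
  set g' : ℕ → ℝ → ℝ :=
    fun m x => (-ν) ^ m * (α * m * x ^ (α * m - 1)) / Real.Gamma (α * m + 1) with hg'_def
  set u : ℕ → ℝ :=
    fun m => (α / A) * (((m:ℝ) + 1) * (ν * B ^ (α:ℝ)) ^ m / Real.Gamma (α * m + 1)) with hu_def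
  have hu : Summable u := (summable_ML hα one_pos (by positivity)).mul_left _
  have hg : ∀ m : ℕ, ∀ x ∈ Set.Ioo A B, HasDerivAt (g m) (g' m x) x := by
    intro m x hx
    have hx0 : x ≠ 0 := ne_of_gt (lt_trans hA0 hx.1)
    have h1 : HasDerivAt (fun x : ℝ => x ^ (α * m)) (α * m * x ^ (α * m - 1)) x :=
      Real.hasDerivAt_rpow_const (Or.inl hx0)
    exact (h1.const_mul ((-ν) ^ m)).div_const _
  have hg' : ∀ m : ℕ, ∀ x ∈ Set.Ioo A B, ‖g' m x‖ ≤ u m := by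
    intro m x hx
    have hx0 : 0 < x := lt_trans hA0 hx.1
    have hGpos : 0 < Real.Gamma (α * m + 1) := Real.Gamma_pos_of_pos (by positivity)
    have hxpow : x ^ (α * m - 1) ≤ B ^ (α * (m:ℝ)) / A := by
      have h1 : x ^ (α * m - 1) = x ^ (α * (m:ℝ)) / x := by
        rw [Real.rpow_sub hx0, Real.rpow_one]
      rw [h1]
      have h2 : x ^ (α * (m:ℝ)) ≤ B ^ (α * (m:ℝ)) :=
        Real.rpow_le_rpow hx0.le (le_of_lt hx.2) (by positivity)
      have h3 : A ≤ x := hx.1.le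
      calc x ^ (α * (m:ℝ)) / x ≤ B ^ (α * (m:ℝ)) / x := by gcongr
        _ ≤ B ^ (α * (m:ℝ)) / A := by gcongr

    have hBpow : B ^ (α * (m:ℝ)) = (B ^ (α:ℝ)) ^ m := by
      rw [Real.rpow_mul hB0.le, Real.rpow_natCast]
    rw [hg'_def]
    simp only [Real.norm_eq_abs, abs_div, abs_mul, abs_pow, abs_neg, abs_of_pos hν,
      abs_of_pos hGpos]
    have hxabs : |x ^ (α * (m:ℝ) - 1)| = x ^ (α * (m:ℝ) - 1) :=
      abs_of_nonneg (Real.rpow_nonneg hx0.le _)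
    rw [hxabs, abs_of_pos hα, Nat.abs_cast]
    have key : ν ^ m * (α * (m:ℝ) * x ^ (α * (m:ℝ) - 1))
        ≤ (α / A) * (((m:ℝ) + 1) * (ν * B ^ (α:ℝ)) ^ m) := by
      have h5 : ν ^ m * (α * (m:ℝ) * x ^ (α * (m:ℝ) - 1))
          ≤ ν ^ m * (α * (m:ℝ) * (B ^ (α * (m:ℝ)) / A)) := by
        have hm0 : (0:ℝ) ≤ α * m := by positivity
        gcongr
      refine h5.trans ?_
      rw [hBpow, mul_pow]
      have hm1 : α * (m:ℝ) * ((ν ^ m * (B ^ (α:ℝ)) ^ m) / A)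
          ≤ α / A * (((m:ℝ) + 1) * (ν ^ m * (B ^ (α:ℝ)) ^ m)) := by
        rw [show α * (m:ℝ) * ((ν ^ m * (B ^ (α:ℝ)) ^ m) / A)
            = (α * (m:ℝ) * (ν ^ m * (B ^ (α:ℝ)) ^ m)) / A by ring,
          show α / A * (((m:ℝ) + 1) * (ν ^ m * (B ^ (α:ℝ)) ^ m))
            = (α * (((m:ℝ) + 1) * (ν ^ m * (B ^ (α:ℝ)) ^ m))) / A by ring]
        have hX : (0:ℝ) ≤ ν ^ m * (B ^ (α:ℝ)) ^ m := by positivity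
        gcongr ?_ / A
        nlinarith [hX, hα.le, Nat.cast_nonneg (α := ℝ) m]
      calc ν ^ m * (α * (m:ℝ) * ((B ^ (α:ℝ)) ^ m / A))
          = α * (m:ℝ) * ((ν ^ m * (B ^ (α:ℝ)) ^ m) / A) := by ring
        _ ≤ _ := hm1
    show _ ≤ α / A * (((m:ℝ) + 1) * (ν * B ^ (α:ℝ)) ^ m / Real.Gamma (α * m + 1))
    rw [← mul_div_assoc, div_le_div_iff₀ hGpos hGpos]
    exact mul_le_mul_of_nonneg_right key hGpos.le
  have hpow : ∀ x : ℝ, 0 ≤ x → ∀ m : ℕ, x ^ (α * (m:ℝ)) = (x ^ (α:ℝ)) ^ m := by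
    intro x hx m
    rw [Real.rpow_mul hx, Real.rpow_natCast]
  have hkey : ∀ x : ℝ, 0 < x →
      mittagLeffler α 1 (-ν * x ^ (α:ℝ)) = ∑' m, g m x := by
    intro x hx
    unfold mittagLeffler
    refine tsum_congr (fun m => ?_)
    rw [hg_def]
    simp only
    rw [mul_pow, ← hpow x hx.le m]
  have hg0s : Summable fun m => g m s := by
    have : (fun m : ℕ => g m s)
        = fun m : ℕ => (-ν * s ^ (α:ℝ)) ^ m / Real.Gamma (α * m + 1) := by
      funext m
      rw [hg_def]
      simp only
      rw [mul_pow, ← hpow s hs.le m]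
    rw [this]
    exact summable_ML' hα one_pos _
  have hder := hasDerivAt_tsum_of_isPreconnected hu isOpen_Ioo isPreconnected_Ioo
    hg hg' hsmem hg0s hsmem
  have hev : (fun x : ℝ => mittagLeffler α 1 (-ν * x ^ (α:ℝ)))
      =ᶠ[nhds s] (fun z => ∑' m, g m z) := by
    filter_upwards [Ioo_mem_nhds hsmem.1 hsmem.2] with x hx
    exact hkey x (lt_trans hA0 hx.1)
  have hfinal := hder.congr_of_eventuallyEq hev
  have hsum' : Summable (fun m => g' m s) :=
    Summable.of_norm_bounded hu (fun m => hg' m s hsmem)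
  have heq : ∑' m, g' m s = -ν * s ^ (α - 1) * mittagLeffler α α (-ν * s ^ (α:ℝ)) := by
    rw [Summable.tsum_eq_zero_add hsum']
    have h0 : g' 0 s = 0 := by
      rw [hg'_def]
      simp
    have hterm : ∀ k : ℕ, g' (k+1) s
        = (-ν * s ^ (α - 1)) * ((-ν * s ^ (α:ℝ)) ^ k / Real.Gamma (α * k + α)) := by
      intro k
      rw [hg'_def]
      simp only
      have hc : ((k+1 : ℕ) : ℝ) = (k:ℝ) + 1 := by push_cast; ring
      have hne : α * ((k:ℝ) + 1) ≠ 0 := by positivity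
      have hGam : Real.Gamma (α * ((k:ℝ)+1) + 1) = (α * ((k:ℝ)+1)) * Real.Gamma (α * k + α) := by
        rw [Real.Gamma_add_one hne]
        ring_nf
      have hrpow : s ^ (α * ((k:ℝ)+1) - 1) = s ^ (α * (k:ℝ)) * s ^ (α - 1) := by
        rw [← Real.rpow_add hs]
        ring_nf
      rw [hc, hGam, hrpow, pow_succ]
      rw [mul_pow, ← hpow s hs.le k]
      have hGpos : 0 < Real.Gamma (α * (k:ℝ) + α) := Real.Gamma_pos_of_pos (by positivity)
      field_simp
    rw [tsum_congr hterm, tsum_mul_left, h0, zero_add]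
    unfold mittagLeffler
    ring
  rw [heq] at hfinal
  exact hfinal

/-- Let `0 < α < 1`, `λ > 0`, `μ > 0`, `T > 0`, `ν = μ/(1+λ)` and let
`f : [0,T] → ℝ` be continuously differentiable (with derivative `f'`). Then
for every `t ∈ (0,T]`,
`(1/(1+λ)) ∫_0^t s^{α−1} E_{α,α}(−ν s^α) f(t−s) ds
  = f(t)/μ − (f(0)/μ) E_{α,1}(−ν t^α) − (1/μ) ∫_0^t E_{α,1}(−ν s^α) f'(t−s) ds`. -/
theorem convolution_integration_by_parts (α lam μ T : ℝ) (hα : 0 < α) (hα1 : α < 1)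
    (hlam : 0 < lam) (hμ : 0 < μ) (hT : 0 < T)
    (f f' : ℝ → ℝ)
    (hderiv : ∀ s ∈ Set.Icc (0:ℝ) T, HasDerivAt f (f' s) s)
    (hcont : ContinuousOn f' (Set.Icc (0:ℝ) T)) :
    ∀ t ∈ Set.Ioc (0:ℝ) T,
      (1 / (1 + lam)) *
          ∫ s in (0:ℝ)..t,
            s ^ (α - 1) * mittagLeffler α α (-(μ / (1 + lam)) * s ^ α) * f (t - s) =
        f t / μ - (f 0 / μ) * mittagLeffler α 1 (-(μ / (1 + lam)) * t ^ α) -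
          (1 / μ) *
            ∫ s in (0:ℝ)..t,
              mittagLeffler α 1 (-(μ / (1 + lam)) * s ^ α) * f' (t - s) := by
  intro t ht
  obtain ⟨ht0, htT⟩ := ht
  have h1lam : (0:ℝ) < 1 + lam := by linarith
  have hν : 0 < μ / (1 + lam) := div_pos hμ h1lam
  set ν : ℝ := μ / (1 + lam) with hν_def
  -- continuity of f on [0, T]
  have hf_cont : ContinuousOn f (Set.Icc 0 T) := fun x hx =>
    ((hderiv x hx).continuousAt).continuousWithinAt
  -- continuity of s ↦ s ^ α
  have hrpow_cont : Continuous (fun s : ℝ => s ^ (α:ℝ)) := by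
    rw [continuous_iff_continuousAt]
    intro x
    exact Real.continuousAt_rpow_const x α (Or.inr hα.le)
  have harg_cont : Continuous (fun s : ℝ => -ν * s ^ (α:ℝ)) := continuous_const.mul hrpow_cont
  have hG_cont : Continuous (fun s : ℝ => mittagLeffler α 1 (-ν * s ^ (α:ℝ))) :=
    (ML_continuous hα one_pos).comp harg_cont
  have hE_cont : Continuous (fun s : ℝ => mittagLeffler α α (-ν * s ^ (α:ℝ))) :=
    (ML_continuous hα hα).comp harg_cont
  -- maps [0,t] into [0,T] by s ↦ t - s
  have hmaps : ∀ s ∈ Set.Icc (0:ℝ) t, t - s ∈ Set.Icc (0:ℝ) T := by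
    intro s hs
    exact ⟨by linarith [hs.2], by linarith [hs.1]⟩
  have hsub_cont : Continuous (fun s : ℝ => t - s) := continuous_const.sub continuous_id
  have hft_cont : ContinuousOn (fun s : ℝ => f (t - s)) (Set.Icc 0 t) :=
    hf_cont.comp hsub_cont.continuousOn hmaps
  have hft'_cont : ContinuousOn (fun s : ℝ => f' (t - s)) (Set.Icc 0 t) :=
    hcont.comp hsub_cont.continuousOn hmaps
  -- bound for f on [0, T]
  obtain ⟨M, hM⟩ := isCompact_Icc.exists_bound_of_continuousOn hf_cont
  set C1 : ℝ := mittagLeffler α α (ν * t ^ (α:ℝ)) with hC1_def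
  have hEbound : ∀ s ∈ Set.Ioc (0:ℝ) t, |mittagLeffler α α (-ν * s ^ (α:ℝ))| ≤ C1 := by
    intro s hs
    refine ML_abs_le hα hα ?_
    have hs0 : (0:ℝ) ≤ s := hs.1.le
    have h1 : s ^ (α:ℝ) ≤ t ^ (α:ℝ) := Real.rpow_le_rpow hs0 hs.2 hα.le
    have h2 : (0:ℝ) ≤ s ^ (α:ℝ) := Real.rpow_nonneg hs0 _
    rw [abs_mul, abs_neg, abs_of_pos hν, abs_of_nonneg h2]
    gcongr
  -- the singular integrand
  set I1 : ℝ → ℝ :=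
    fun s => s ^ (α - 1) * mittagLeffler α α (-ν * s ^ (α:ℝ)) * f (t - s) with hI1_def
  have hI1_contOn : ContinuousOn I1 (Set.Ioc 0 t) := by
    refine ContinuousOn.mul (ContinuousOn.mul ?_ hE_cont.continuousOn) ?_
    · intro x hx
      exact (Real.continuousAt_rpow_const x (α - 1) (Or.inl hx.1.ne')).continuousWithinAt
    · exact (hft_cont.mono Set.Ioc_subset_Icc_self)
  have hrpow_int : IntegrableOn (fun s : ℝ => s ^ (α - 1)) (Set.Ioc 0 t) := by
    have h := intervalIntegral.intervalIntegrable_rpow' (a := 0) (b := t) (r := α - 1)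
      (by linarith)
    rwa [intervalIntegrable_iff_integrableOn_Ioc_of_le ht0.le] at h
  have hI1_int : IntegrableOn I1 (Set.Ioc 0 t) := by
    refine Integrable.mono' ((hrpow_int.mul_const (C1 * |M|)).mono_measure le_rfl) 
      (hI1_contOn.aestronglyMeasurable measurableSet_Ioc) ?_
    filter_upwards [self_mem_ae_restrict measurableSet_Ioc] with s hs
    have hs0 : 0 < s := hs.1
    have hrp : (0:ℝ) ≤ s ^ (α - 1) := Real.rpow_nonneg hs0.le _
    have hfb : |f (t - s)| ≤ |M| := by
      have := hM (t - s) (hmaps s (Set.Ioc_subset_Icc_self hs))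
      rw [Real.norm_eq_abs] at this
      exact this.trans (le_abs_self M)
    have hEb := hEbound s hs
    have hC1_0 : 0 ≤ C1 := (abs_nonneg _).trans hEb
    rw [Real.norm_eq_abs, hI1_def]
    simp only
    rw [abs_mul, abs_mul, abs_of_nonneg hrp]
    calc s ^ (α - 1) * |mittagLeffler α α (-ν * s ^ (α:ℝ))| * |f (t - s)|
        ≤ s ^ (α - 1) * C1 * |M| := by
          have h0 : 0 ≤ |mittagLeffler α α (-ν * s ^ (α:ℝ))| := abs_nonneg _
          gcongr
      _ = s ^ (α - 1) * (C1 * |M|) := by ring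
  have II1 : IntervalIntegrable I1 volume 0 t := by
    rw [intervalIntegrable_iff_integrableOn_Ioc_of_le ht0.le]
    exact hI1_int
  set I2 : ℝ → ℝ :=
    fun s => mittagLeffler α 1 (-ν * s ^ (α:ℝ)) * f' (t - s) with hI2_def
  have II2 : IntervalIntegrable I2 volume 0 t := by
    apply ContinuousOn.intervalIntegrable
    rw [Set.uIcc_of_le ht0.le]
    exact hG_cont.continuousOn.mul hft'_cont
  -- the product function and its derivative
  set H : ℝ → ℝ := fun s => mittagLeffler α 1 (-ν * s ^ (α:ℝ)) * f (t - s) with hH_def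
  set H' : ℝ → ℝ := fun s => -ν * I1 s - I2 s with hH'_def
  have hHd : ∀ s ∈ Set.Ioo (0:ℝ) t, HasDerivAt H (H' s) s := by
    intro s hs
    have hts : t - s ∈ Set.Icc (0:ℝ) T := hmaps s ⟨hs.1.le, hs.2.le⟩
    have hf1 : HasDerivAt f (f' (t - s)) (t - s) := hderiv _ hts
    have hsub : HasDerivAt (fun x : ℝ => t - x) (-1) s := by
      simpa using (hasDerivAt_id s).const_sub t
    have hcomp : HasDerivAt (fun x : ℝ => f (t - x)) (-f' (t - s)) s := by
      have := hf1.comp s hsub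
      exact this.congr_deriv (by ring)
    have hGd := ML_hasDerivAt hα hν hs.1
    have := hGd.mul hcomp
    refine this.congr_deriv ?_
    rw [hH'_def, hI1_def, hI2_def]
    simp only
    ring
  have hHcont : ContinuousOn H (Set.Icc 0 t) := hG_cont.continuousOn.mul hft_cont
  have IIH' : IntervalIntegrable H' volume 0 t := (II1.const_mul (-ν)).sub II2
  have hFTC : ∫ s in (0:ℝ)..t, H' s = H t - H 0 :=
    intervalIntegral.integral_eq_sub_of_hasDeriv_right_of_le ht0.le hHcont
      (fun x hx => (hHd x hx).hasDerivWithinAt) IIH'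
  -- evaluate H 0
  have hML0 : mittagLeffler α 1 (-ν * (0:ℝ) ^ (α:ℝ)) = 1 := by
    rw [Real.zero_rpow hα.ne', mul_zero]
    unfold mittagLeffler
    rw [tsum_eq_single 0 (fun m hm => by simp [zero_pow hm])]
    simp
  have hH0 : H 0 = f t := by
    rw [hH_def]
    simp only
    rw [hML0, sub_zero, one_mul]
  -- split the integral
  have hsplit : ∫ s in (0:ℝ)..t, H' s
      = -ν * (∫ s in (0:ℝ)..t, I1 s) - ∫ s in (0:ℝ)..t, I2 s := by
    rw [hH'_def]
    rw [intervalIntegral.integral_sub (II1.const_mul (-ν)) II2,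
      intervalIntegral.integral_const_mul]
  have key : -ν * (∫ s in (0:ℝ)..t, I1 s) - (∫ s in (0:ℝ)..t, I2 s)
      = mittagLeffler α 1 (-ν * t ^ (α:ℝ)) * f 0 - f t := by
    rw [← hsplit, hFTC, hH0, hH_def]
    simp only
    rw [sub_self]
  -- final algebra
  have hμ0 : μ ≠ 0 := hμ.ne'
  have h1lam0 : (1:ℝ) + lam ≠ 0 := h1lam.ne'
  show (1 / (1 + lam)) * (∫ s in (0:ℝ)..t, I1 s)
      = f t / μ - (f 0 / μ) * mittagLeffler α 1 (-ν * t ^ (α:ℝ))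
        - (1 / μ) * ∫ s in (0:ℝ)..t, I2 s
  have key2 : ν * (∫ s in (0:ℝ)..t, I1 s)
      = f t - mittagLeffler α 1 (-ν * t ^ (α:ℝ)) * f 0 - ∫ s in (0:ℝ)..t, I2 s := by
    linarith [key]
  have hc : (1:ℝ) / (1 + lam) = (1 / μ) * ν := by
    rw [hν_def]
    field_simp
  rw [hc, mul_assoc, key2]
  ring
end

section
/- Let 0 < α < 1, ν > 0, T > 0. Let u : [0, T] → ℝ be continuous on [0, T] and continuously differentiable on (0, T] with u' integrable on (0, T), and suppose u(0) = 0 and D^α_t u(t) + ν u(t) = 0 for every t ∈ (0, T]. Then u(t) = 0 for all t ∈ [0, T]. -/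
open Set MeasureTheory Filter intervalIntegral Real Topology

lemma caputo_aux_nonpos (α ν T : ℝ)
    (hα : 0 < α) (hα1 : α < 1) (hν : 0 < ν) (hT : 0 < T)
    (u u' : ℝ → ℝ)
    (hcont : ContinuousOn u (Set.Icc (0:ℝ) T))
    (hderiv : ∀ t ∈ Set.Ioc (0:ℝ) T, HasDerivAt u (u' t) t)
    (hcont' : ContinuousOn u' (Set.Ioc (0:ℝ) T))
    (hint : MeasureTheory.IntegrableOn u' (Set.Ioo (0:ℝ) T))
    (h0 : u 0 = 0)
    (heq : ∀ t ∈ Set.Ioc (0:ℝ) T,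
      (1 / Real.Gamma (1 - α)) * (∫ s in (0:ℝ)..t, u' s * (t - s) ^ (-α)) +
        ν * u t = 0) :
    ∀ t ∈ Set.Icc (0:ℝ) T, u t ≤ 0 := by
  obtain ⟨t0, ht0, hmax⟩ := isCompact_Icc.exists_isMaxOn (α := ℝ)
    ⟨0, left_mem_Icc.mpr hT.le⟩ hcont
  intro t ht
  refine le_trans (hmax ht) ?_
  by_contra hM0
  push_neg at hM0
  set M := u t0 with hMdef
  have ht0T : t0 ≤ T := ht0.2
  have t0pos : 0 < t0 := by
    rcases eq_or_lt_of_le ht0.1 with h | h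
    · exfalso; rw [hMdef, ← h, h0] at hM0; exact lt_irrefl 0 hM0
    · exact h
  have ht02 : 0 < t0 / 2 := by positivity
  -- bound for u' near t0
  have hsub : Icc (t0/2) t0 ⊆ Ioc 0 T := fun s hs => ⟨lt_of_lt_of_le ht02 hs.1, hs.2.trans ht0T⟩
  obtain ⟨C, hC⟩ := isCompact_Icc.exists_bound_of_continuousOn (hcont'.mono hsub)
  have hC0 : 0 ≤ C := le_trans (norm_nonneg _) (hC t0 (right_mem_Icc.mpr (by linarith)))
  set f : ℝ → ℝ := fun s => u' s * (t0 - s) ^ (-α) with hfdef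
  -- Integrability of f on Ioo 0 t0
  have hint1 : IntegrableOn f (Ioc 0 (t0/2)) := by
    have hsub1 : Ioc (0:ℝ) (t0/2) ⊆ Ioc 0 T := Ioc_subset_Ioc_right (by linarith)
    refine Integrable.mono' (g := fun s => (t0/2) ^ (-α) * |u' s|)
      (((hint.mono_set (fun s hs => ⟨hs.1, lt_of_le_of_lt hs.2 (by linarith)⟩)).norm.const_mul _))
      ?_ ?_
    · refine ContinuousOn.aestronglyMeasurable ?_ measurableSet_Ioc
      refine ((hcont'.mono hsub1)).mul (ContinuousOn.rpow_const ?_ ?_)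
      · exact (continuous_const.sub continuous_id).continuousOn
      · intro s hs; left
        have hst : s < t0 := lt_of_le_of_lt hs.2 (by linarith)
        exact (by linarith : (0:ℝ) < t0 - s).ne'
    · filter_upwards [ae_restrict_mem measurableSet_Ioc] with s hs
      have h1 : (0:ℝ) < t0 - s := by have := hs.2; linarith
      rw [norm_mul, Real.norm_eq_abs, Real.norm_eq_abs,
        abs_of_pos (Real.rpow_pos_of_pos h1 _)]
      have : (t0 - s) ^ (-α) ≤ (t0/2) ^ (-α) := by
        apply Real.rpow_le_rpow_of_nonpos ht02 (by have := hs.2; linarith) (by linarith)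
      calc |u' s| * (t0 - s) ^ (-α) ≤ |u' s| * (t0/2) ^ (-α) :=
            mul_le_mul_of_nonneg_left this (abs_nonneg _)
        _ = (t0/2) ^ (-α) * |u' s| := mul_comm _ _
  have hg_int : IntegrableOn (fun s => (t0 - s) ^ (-α)) (Ioo (t0/2) t0) := by
    have h1 : IntervalIntegrable (fun x : ℝ => x ^ (-α)) volume 0 (t0/2) :=
      intervalIntegrable_rpow' (by linarith)
    have h2 := (h1.comp_sub_left t0).symm
    simp only [sub_zero] at h2
    have heq2 : t0 - t0/2 = t0/2 := by ring
    rw [heq2] at h2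
    have h3 : IntervalIntegrable (fun x => (t0 - x) ^ (-α)) volume (t0/2) t0 := h2
    rw [intervalIntegrable_iff_integrableOn_Ioo_of_le (by linarith)] at h3
    exact h3
  have hint2 : IntegrableOn f (Ioo (t0/2) t0) := by
    refine Integrable.mono' (g := fun s => C * (t0 - s) ^ (-α)) (hg_int.const_mul C) ?_ ?_
    · refine ContinuousOn.aestronglyMeasurable ?_ measurableSet_Ioo
      refine (hcont'.mono (fun s hs => ⟨lt_trans ht02 hs.1, hs.2.le.trans ht0T⟩)).mul
        (ContinuousOn.rpow_const ((continuous_const.sub continuous_id).continuousOn) ?_)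
      intro s hs; left; exact (by have := hs.2; linarith : (0:ℝ) < t0 - s).ne'
    · filter_upwards [ae_restrict_mem measurableSet_Ioo] with s hs
      have h1 : (0:ℝ) < t0 - s := by have := hs.2; linarith
      rw [norm_mul, Real.norm_eq_abs, Real.norm_eq_abs,
        abs_of_pos (Real.rpow_pos_of_pos h1 _)]
      exact mul_le_mul_of_nonneg_right
        ((Real.norm_eq_abs _ ▸ hC s ⟨hs.1.le, hs.2.le⟩)) (Real.rpow_nonneg h1.le _)
  have hfint : IntegrableOn f (Ioo 0 t0) := by
    refine ((hint1.union hint2).mono_set ?_)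
    intro s hs
    rcases le_or_gt s (t0/2) with h | h
    · exact Or.inl ⟨hs.1, h⟩
    · exact Or.inr ⟨h, hs.2⟩
  set I : ℝ := ∫ s in Ioo (0:ℝ) t0, f s with hIdef
  -- the interval integral in heq equals I
  have hIeq : (∫ s in (0:ℝ)..t0, u' s * (t0 - s) ^ (-α)) = I := by
    rw [intervalIntegral.integral_of_le t0pos.le, MeasureTheory.integral_Ioc_eq_integral_Ioo]
  -- limit of truncated integrals
  have htendI : Tendsto (fun δ : ℝ => ∫ s in Ioc δ (t0 - δ), f s ∂(volume.restrict (Ioo 0 t0)))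
      (𝓝[>] (0:ℝ)) (𝓝 I) := by
    have ha : Tendsto (fun δ : ℝ => δ) (𝓝[>] (0:ℝ)) (𝓝 0) :=
      tendsto_id.mono_right nhdsWithin_le_nhds
    have hb : Tendsto (fun δ : ℝ => t0 - δ) (𝓝[>] (0:ℝ)) (𝓝 t0) := by
      have := Filter.Tendsto.sub (tendsto_const_nhds (x := t0) (f := 𝓝[>] (0:ℝ))) ha
      simpa using this
    have cover := MeasureTheory.aecover_Ioo_of_Ioc (μ := volume) (l := 𝓝[>] (0:ℝ))
      (a := fun δ => δ) (b := fun δ => t0 - δ) ha hb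
    exact cover.integral_tendsto_of_countably_generated hfint
  -- eventual lower bound
  have hIBP : ∀ δ ∈ Ioo (0:ℝ) (t0/2),
      (u (t0 - δ) - M) * δ ^ (-α) + (M - u δ) * (t0 - δ) ^ (-α)
        ≤ ∫ s in Ioc δ (t0 - δ), f s ∂(volume.restrict (Ioo 0 t0)) := by
    intro δ hδ
    have hδ0 : 0 < δ := hδ.1
    have hδ2 : δ < t0/2 := hδ.2
    have hle : δ ≤ t0 - δ := by linarith
    have hIcc : Set.uIcc δ (t0 - δ) = Icc δ (t0 - δ) := Set.uIcc_of_le hle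
    have hIccsub : Icc δ (t0 - δ) ⊆ Ioc 0 T := fun s hs =>
      ⟨lt_of_lt_of_le hδ0 hs.1, le_trans hs.2 (by linarith)⟩
    have hpos : ∀ s ∈ Icc δ (t0 - δ), (0:ℝ) < t0 - s := fun s hs => by
      have := hs.2; linarith
    -- rewrite restricted integral
    have hrw : (∫ s in Ioc δ (t0 - δ), f s ∂(volume.restrict (Ioo 0 t0)))
        = ∫ s in δ..(t0 - δ), f s := by
      rw [MeasureTheory.Measure.restrict_restrict measurableSet_Ioc,
        Set.inter_eq_left.mpr (fun s hs => Set.mem_Ioo.mpr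
          ⟨lt_of_lt_of_le hδ0 hs.1.le, by have := hs.2; linarith⟩),
        intervalIntegral.integral_of_le hle]
    rw [hrw]
    -- derivative of v s = (t0 - s)^(-α)
    have hv : ∀ x ∈ Icc δ (t0 - δ),
        HasDerivAt (fun s => (t0 - s) ^ (-α)) (α * (t0 - x) ^ (-α - 1)) x := by
      intro x hx
      have hx0 : (0:ℝ) < t0 - x := hpos x hx
      have h1 : HasDerivAt (fun s : ℝ => t0 - s) (-1) x := by
        simpa using (hasDerivAt_id x).const_sub t0
      have h2 := (Real.hasDerivAt_rpow_const (x := t0 - x) (p := -α)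
        (Or.inl hx0.ne')).comp x h1
      rw [show α * (t0 - x) ^ (-α - 1) = -α * (t0 - x) ^ (-α - 1) * -1 by ring]
      exact h2
    have hucont : ContinuousOn u (Set.uIcc δ (t0 - δ)) := by
      rw [hIcc]
      exact fun x hx => ((hderiv x (hIccsub hx)).continuousAt).continuousWithinAt
    have hvcont : ContinuousOn (fun s => (t0 - s) ^ (-α)) (Set.uIcc δ (t0 - δ)) := by
      rw [hIcc]
      exact ContinuousOn.rpow_const ((continuous_const.sub continuous_id).continuousOn)
        (fun x hx => Or.inl (hpos x hx).ne')
    have hu'int : IntervalIntegrable u' volume δ (t0 - δ) := by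
      apply ContinuousOn.intervalIntegrable
      rw [hIcc]; exact hcont'.mono hIccsub
    have hv'cont : ContinuousOn (fun x => α * (t0 - x) ^ (-α - 1)) (Icc δ (t0 - δ)) := by
      exact (continuousOn_const.mul (ContinuousOn.rpow_const
        ((continuous_const.sub continuous_id).continuousOn)
        (fun x hx => Or.inl (hpos x hx).ne')))
    have hv'int : IntervalIntegrable (fun x => α * (t0 - x) ^ (-α - 1)) volume δ (t0 - δ) := by
      apply ContinuousOn.intervalIntegrable; rw [hIcc]; exact hv'cont
    -- integration by parts
    have hibp := intervalIntegral.integral_deriv_mul_eq_sub_of_hasDerivAt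
      (u := u) (v := fun s => (t0 - s) ^ (-α)) (u' := u') (v' := fun x => α * (t0 - x) ^ (-α - 1))
      (a := δ) (b := t0 - δ) hucont hvcont
      (fun x hx => hderiv x (hIccsub (by
        rw [min_eq_left hle, max_eq_right hle] at hx
        exact Ioo_subset_Icc_self hx)))
      (fun x hx => hv x (by
        rw [min_eq_left hle, max_eq_right hle] at hx
        exact Ioo_subset_Icc_self hx))
      hu'int hv'int
    have hsplit : (∫ x in δ..(t0 - δ), (u' x * (t0 - x) ^ (-α) + u x * (α * (t0 - x) ^ (-α - 1))))
        = (∫ x in δ..(t0 - δ), u' x * (t0 - x) ^ (-α))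
          + ∫ x in δ..(t0 - δ), u x * (α * (t0 - x) ^ (-α - 1)) := by
      apply intervalIntegral.integral_add
      · apply ContinuousOn.intervalIntegrable
        rw [hIcc]
        exact (hcont'.mono hIccsub).mul (ContinuousOn.rpow_const
          ((continuous_const.sub continuous_id).continuousOn)
          (fun x hx => Or.inl (hpos x hx).ne'))
      · apply ContinuousOn.intervalIntegrable
        rw [hIcc]
        exact (hucont.mono (by rw [hIcc])).mul hv'cont
    -- compute the boundary values
    have hbv : u (t0 - δ) * (t0 - (t0 - δ)) ^ (-α) - u δ * (t0 - δ) ^ (-α)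
        = u (t0 - δ) * δ ^ (-α) - u δ * (t0 - δ) ^ (-α) := by ring_nf
    -- monotone bound for the second integral
    have hmono : (∫ x in δ..(t0 - δ), u x * (α * (t0 - x) ^ (-α - 1)))
        ≤ ∫ x in δ..(t0 - δ), M * (α * (t0 - x) ^ (-α - 1)) := by
      apply intervalIntegral.integral_mono_on hle
      · apply ContinuousOn.intervalIntegrable
        rw [hIcc]; exact (hucont.mono (by rw [hIcc])).mul hv'cont
      · apply ContinuousOn.intervalIntegrable
        rw [hIcc]; exact continuousOn_const.mul hv'cont
      · intro x hx
        have hx0 : (0:ℝ) < t0 - x := hpos x hx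
        have hux : u x ≤ M := hmax ⟨le_trans hδ0.le hx.1, le_trans hx.2 (by linarith)⟩
        exact mul_le_mul_of_nonneg_right hux
          (by positivity)
      -- compute ∫ α (t0-x)^(-α-1)
    have hcomp : (∫ x in δ..(t0 - δ), α * (t0 - x) ^ (-α - 1))
        = δ ^ (-α) - (t0 - δ) ^ (-α) := by
      have := intervalIntegral.integral_eq_sub_of_hasDerivAt
        (f := fun s => (t0 - s) ^ (-α)) (f' := fun x => α * (t0 - x) ^ (-α - 1))
        (a := δ) (b := t0 - δ)
        (fun x hx => hv x (by rwa [hIcc] at hx)) hv'int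
      rw [this]; ring_nf
    have hcomp2 : (∫ x in δ..(t0 - δ), M * (α * (t0 - x) ^ (-α - 1)))
        = M * (δ ^ (-α) - (t0 - δ) ^ (-α)) := by
      rw [intervalIntegral.integral_const_mul, hcomp]
    have key : (∫ x in δ..(t0 - δ), u' x * (t0 - x) ^ (-α))
        ≥ u (t0 - δ) * δ ^ (-α) - u δ * (t0 - δ) ^ (-α)
          - M * (δ ^ (-α) - (t0 - δ) ^ (-α)) := by
      simp only [sub_sub_cancel] at hibp
      rw [hsplit] at hibp
      have hmono' : (∫ x in δ..(t0 - δ), u x * (α * (t0 - x) ^ (-α - 1)))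
          ≤ M * (δ ^ (-α) - (t0 - δ) ^ (-α)) := by rw [← hcomp2]; exact hmono
      linarith
    have hres : (∫ s in δ..(t0 - δ), f s) = ∫ x in δ..(t0 - δ), u' x * (t0 - x) ^ (-α) := rfl
    rw [hres]
    nlinarith [key]
  -- Lipschitz bound near t0
  have hlip : ∀ δ ∈ Ioo (0:ℝ) (t0/2), M - u (t0 - δ) ≤ C * δ := by
    intro δ hδ
    have h1 := Convex.norm_image_sub_le_of_norm_hasDerivWithin_le
      (f := u) (f' := u') (s := Icc (t0/2) t0) (C := C)
      (fun x hx => (hderiv x (hsub hx)).hasDerivWithinAt)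
      (fun x hx => hC x hx) (convex_Icc _ _)
      (x := t0 - δ) (y := t0)
      ⟨by linarith [hδ.2], by linarith [hδ.1]⟩
      (right_mem_Icc.mpr (by linarith))
    have h2 : ‖t0 - (t0 - δ)‖ = δ := by
      rw [Real.norm_eq_abs, abs_of_pos (by linarith [hδ.1] : (0:ℝ) < t0 - (t0 - δ))]
      ring
    rw [h2, Real.norm_eq_abs] at h1
    calc M - u (t0 - δ) ≤ |u t0 - u (t0 - δ)| := by
          rw [hMdef]; exact le_abs_self _
      _ ≤ C * δ := h1
  have hL : ∀ δ ∈ Ioo (0:ℝ) (t0/2),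
      -(C * δ ^ (1-α)) + (M - u δ) * (t0 - δ) ^ (-α)
        ≤ ∫ s in Ioc δ (t0 - δ), f s ∂(volume.restrict (Ioo 0 t0)) := by
    intro δ hδ
    refine le_trans ?_ (hIBP δ hδ)
    have hδ0 : (0:ℝ) < δ := hδ.1
    have h2 : -(C * δ) ≤ u (t0 - δ) - M := by linarith [hlip δ hδ]
    have h3 : (0:ℝ) < δ ^ (-α) := Real.rpow_pos_of_pos hδ0 _
    have h4 : (-(C * δ)) * δ ^ (-α) ≤ (u (t0 - δ) - M) * δ ^ (-α) :=
      mul_le_mul_of_nonneg_right h2 h3.le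
    have h5 : (-(C * δ)) * δ ^ (-α) = -(C * δ ^ (1 - α)) := by
      rw [show (1 : ℝ) - α = 1 + (-α) by ring, Real.rpow_add hδ0, Real.rpow_one]
      ring
    linarith
  -- limit of lower bound
  have hb' : Tendsto (fun δ : ℝ => t0 - δ) (𝓝[>] (0:ℝ)) (𝓝 t0) := by
    have := Filter.Tendsto.sub (tendsto_const_nhds (x := t0) (f := 𝓝[>] (0:ℝ)))
      (tendsto_id.mono_right nhdsWithin_le_nhds)
    simpa using this
  have hlim : Tendsto (fun δ => -(C * δ ^ (1-α)) + (M - u δ) * (t0 - δ) ^ (-α))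
      (𝓝[>] (0:ℝ)) (𝓝 (M * t0 ^ (-α))) := by
    have h1 : Tendsto (fun δ : ℝ => δ ^ (1-α)) (𝓝[>] (0:ℝ)) (𝓝 0) := by
      have h := (Real.continuousAt_rpow_const 0 (1-α) (Or.inr (by linarith))).tendsto
      rw [Real.zero_rpow (by intro h'; linarith [h'] : (1:ℝ)-α ≠ 0)] at h
      exact h.mono_left nhdsWithin_le_nhds
    have h2 : Tendsto u (𝓝[>] (0:ℝ)) (𝓝 0) := by
      have hc := (hcont 0 (left_mem_Icc.mpr hT.le))
      rw [← nhdsWithin_Ioo_eq_nhdsGT hT]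
      have h' : Tendsto u (𝓝[Ioo 0 T] 0) (𝓝 (u 0)) :=
        hc.mono_left (nhdsWithin_mono _ Ioo_subset_Icc_self)
      rwa [h0] at h'
    have h3 : Tendsto (fun δ : ℝ => (t0 - δ) ^ (-α)) (𝓝[>] (0:ℝ)) (𝓝 (t0 ^ (-α))) :=
      (Real.continuousAt_rpow_const t0 (-α) (Or.inl t0pos.ne')).tendsto.comp hb'
    have h4 := ((h1.const_mul C).neg).add ((Filter.Tendsto.sub
      (tendsto_const_nhds (x := M)) h2).mul h3)
    simpa using h4
  have hIge : M * t0 ^ (-α) ≤ I := by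
    refine le_of_tendsto_of_tendsto hlim htendI ?_
    filter_upwards [Ioo_mem_nhdsGT_of_mem (Set.left_mem_Ico.mpr ht02)] with δ hδ
    exact hL δ hδ
  -- contradiction with the equation at t0
  have hg : 0 < Real.Gamma (1-α) := Real.Gamma_pos_of_pos (by linarith)
  have hIpos : 0 < I := by
    refine lt_of_lt_of_le ?_ hIge
    have := Real.rpow_pos_of_pos t0pos (-α)
    positivity
  have hfin := heq t0 ⟨t0pos, ht0T⟩
  rw [hIeq, ← hMdef] at hfin
  have h1 : 0 < (1 / Real.Gamma (1-α)) * I := by positivity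
  have h2 : 0 < ν * M := mul_pos hν hM0
  linarith


/-- Let `0 < α < 1`, `ν > 0`, `T > 0`. If `u : [0,T] → ℝ` is continuous on
`[0,T]`, continuously differentiable on `(0,T]` with derivative `u'` integrable
on `(0,T)`, `u(0) = 0`, and `D^α_t u(t) + ν u(t) = 0` for all `t ∈ (0,T]`
(where `D^α_t u(t) = (1/Γ(1−α)) ∫_0^t u'(s)(t−s)^{−α} ds` is the Caputo
derivative with base point `0`), then `u ≡ 0` on `[0,T]`. -/
theorem caputo_homogeneous_uniqueness (α ν T : ℝ)
    (hα : 0 < α) (hα1 : α < 1) (hν : 0 < ν) (hT : 0 < T)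
    (u u' : ℝ → ℝ)
    (hcont : ContinuousOn u (Set.Icc (0:ℝ) T))
    (hderiv : ∀ t ∈ Set.Ioc (0:ℝ) T, HasDerivAt u (u' t) t)
    (hcont' : ContinuousOn u' (Set.Ioc (0:ℝ) T))
    (hint : MeasureTheory.IntegrableOn u' (Set.Ioo (0:ℝ) T))
    (h0 : u 0 = 0)
    (heq : ∀ t ∈ Set.Ioc (0:ℝ) T,
      (1 / Real.Gamma (1 - α)) * (∫ s in (0:ℝ)..t, u' s * (t - s) ^ (-α)) +
        ν * u t = 0) :
    ∀ t ∈ Set.Icc (0:ℝ) T, u t = 0 := by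
  have hle := caputo_aux_nonpos α ν T hα hα1 hν hT u u' hcont hderiv hcont' hint h0 heq
  have hge := caputo_aux_nonpos α ν T hα hα1 hν hT (fun t => -u t) (fun t => -u' t)
    hcont.neg (fun t ht => (hderiv t ht).neg) hcont'.neg hint.neg (by simp [h0])
    (by
      intro t ht
      have h1 : (∫ s in (0:ℝ)..t, (-u' s) * (t - s) ^ (-α))
          = -∫ s in (0:ℝ)..t, u' s * (t - s) ^ (-α) := by
        rw [← intervalIntegral.integral_neg]
        congr 1
        funext s
        ring
      rw [h1]
      have := heq t ht
      ring_nf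
      ring_nf at this
      linarith)
  intro t ht
  have := hle t ht
  have h2 := hge t ht
  simp at h2
  linarith
end
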